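/- Let V = V₁ × V₂ with A a symmetric positive definite bilinear form, Z the elimination operator, and a₁ the Schur-complement form. A pair (λ, (u₁, u₂)) with λ > 0 and (u₁,u₂) ≠ 0 satisfies A((u₁,u₂),(w₁,w₂)) = λ ⟨u₁, w₁⟩ for all (w₁,w₂) ∈ V (where ⟨·,·⟩ is an inner product on V₁) if and only if u₂ = Z u₁ and a₁(u₁, w₁) = λ ⟨u₁, w₁⟩ for all w₁ ∈ V₁. -/

import Mathlib

open scoped RealInnerProductSpace

/-!
Every `(w₁, w₂)` splits as `(w₁, Z w₁) + (0, w₂ - Z w₁)`, and `(v₁, Z v₁)` is `A`-orthogonal to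
the second summand. Testing the full eigenproblem with `(0, w₂)` therefore shows that
`(0, u₂ - Z u₁)` is `A`-orthogonal to all of `0 × V₂`, hence zero by positivity; testing with
`(w₁, Z w₁)` gives the condensed problem, and conversely the splitting reduces every test
function to one of that form.
-/

section StaticCondensation

variable {R M₁ M₂ : Type*} [CommRing R] [AddCommGroup M₁] [Module R M₁]
  [AddCommGroup M₂] [Module R M₂]
  (A : (M₁ × M₂) →ₗ[R] (M₁ × M₂) →ₗ[R] R) (Z : M₁ →ₗ[R] M₂)

theorem apply_graph_eq_apply_graph (hZ : ∀ (v₁ : M₁) (w₂ : M₂), A (v₁, Z v₁) (0, w₂) = 0)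
    (v₁ w₁ : M₁) (w₂ : M₂) : A (v₁, Z v₁) (w₁, w₂) = A (v₁, Z v₁) (w₁, Z w₁) := by
  have hsplit : ((w₁, w₂) : M₁ × M₂) = (w₁, Z w₁) + (0, w₂ - Z w₁) := by
    simp
  rw [hsplit, map_add, hZ, add_zero]

theorem snd_eq_of_forall_apply_zero_snd_eq_zero
    (hZ : ∀ (v₁ : M₁) (w₂ : M₂), A (v₁, Z v₁) (0, w₂) = 0)
    (hA : ∀ w₂ : M₂, A (0, w₂) (0, w₂) = 0 → w₂ = 0)
    {u₁ : M₁} {u₂ : M₂} (hu : ∀ w₂ : M₂, A (u₁, u₂) (0, w₂) = 0) : u₂ = Z u₁ := by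
  have hsplit : ((u₁, u₂) : M₁ × M₂) = (u₁, Z u₁) + (0, u₂ - Z u₁) := by
    simp
  have horth : ∀ w₂ : M₂, A (0, u₂ - Z u₁) (0, w₂) = 0 := fun w₂ => by
    simpa only [hsplit, map_add, LinearMap.add_apply, hZ, zero_add] using hu w₂
  exact sub_eq_zero.mp (hA _ (horth _))

end StaticCondensation

theorem stmt8_general {V₁ V₂ : Type*} [NormedAddCommGroup V₁] [InnerProductSpace ℝ V₁]
    [AddCommGroup V₂] [Module ℝ V₂]
    (A : (V₁ × V₂) →ₗ[ℝ] (V₁ × V₂) →ₗ[ℝ] ℝ)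
    (hpos : ∀ v : V₁ × V₂, v ≠ 0 → 0 < A v v)
    (Z : V₁ →ₗ[ℝ] V₂)
    (hZ : ∀ (v₁ : V₁) (w₂ : V₂), A (v₁, Z v₁) (0, w₂) = 0)
    (lam : ℝ) (u₁ : V₁) (u₂ : V₂) :
    (∀ (w₁ : V₁) (w₂ : V₂), A (u₁, u₂) (w₁, w₂) = lam * ⟪u₁, w₁⟫) ↔
      (u₂ = Z u₁ ∧ ∀ w₁ : V₁, A (u₁, Z u₁) (w₁, Z w₁) = lam * ⟪u₁, w₁⟫) := by
  constructor
  · intro h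
    have hA : ∀ w₂ : V₂, A (0, w₂) (0, w₂) = 0 → w₂ = 0 := fun w₂ hw => by
      by_contra hne
      exact (hpos (0, w₂) (by simpa using hne)).ne' hw
    have hu₂ : u₂ = Z u₁ := snd_eq_of_forall_apply_zero_snd_eq_zero A Z hZ hA fun w₂ => by
      simpa using h 0 w₂
    subst hu₂
    exact ⟨rfl, fun w₁ => h w₁ (Z w₁)⟩
  · rintro ⟨rfl, h⟩ w₁ w₂
    rw [apply_graph_eq_apply_graph A Z hZ, h]

theorem stmt8 {V₁ V₂ : Type*} [NormedAddCommGroup V₁] [InnerProductSpace ℝ V₁]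
    [AddCommGroup V₂] [Module ℝ V₂]
    [FiniteDimensional ℝ V₁] [FiniteDimensional ℝ V₂]
    (A : (V₁ × V₂) →ₗ[ℝ] (V₁ × V₂) →ₗ[ℝ] ℝ)
    (hsym : ∀ v w, A v w = A w v)
    (hpos : ∀ v : V₁ × V₂, v ≠ 0 → 0 < A v v)
    (Z : V₁ →ₗ[ℝ] V₂)
    (hZ : ∀ (v₁ : V₁) (w₂ : V₂), A (v₁, Z v₁) (0, w₂) = 0)
    (lam : ℝ) (hlam : 0 < lam) (u₁ : V₁) (u₂ : V₂) (hne : (u₁, u₂) ≠ 0) :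
    (∀ (w₁ : V₁) (w₂ : V₂), A (u₁, u₂) (w₁, w₂) = lam * ⟪u₁, w₁⟫) ↔
      (u₂ = Z u₁ ∧ ∀ w₁ : V₁, A (u₁, Z u₁) (w₁, Z w₁) = lam * ⟪u₁, w₁⟫) :=
  stmt8_general A hpos Z hZ lam u₁ u₂
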